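/- arXiv:2403.18061 — 4 statements merged into one kernel-verified Lean document; each statement's English description precedes it below -/
import Mathlib

section
/- For a self-adjoint operator h and a faithful state ω, the GNS Hamiltonian H = π_ℓ(h) − π_r(h) is self-adjoint as an operator on the GNS space if and only if h is a symmetry of ω, i.e., ω([h,a]) = 0 for all a ∈ A. -/
open scoped Matrix ComplexOrder

lemma aux_trace_zero {d : ℕ} (M : Matrix (Fin d) (Fin d) ℂ)
    (hM : ∀ a : Matrix (Fin d) (Fin d) ℂ, (M * a).trace = 0) : M = 0 := by
  ext i j
  have := hM (Matrix.single j i 1)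
  simpa [Matrix.trace, Matrix.mul_apply, Matrix.single, ite_and,
    Finset.sum_ite_eq, Matrix.diag] using this

lemma aux_comm {d : ℕ} (ρ h : Matrix (Fin d) (Fin d) ℂ)
    (hc : ∀ c : Matrix (Fin d) (Fin d) ℂ, (ρ * (h * c)).trace = (ρ * (c * h)).trace) :
    ρ * h = h * ρ := by
  have hz : ∀ c : Matrix (Fin d) (Fin d) ℂ, ((ρ * h - h * ρ) * c).trace = 0 := by
    intro c
    have h1 : (ρ * (c * h)).trace = ((h * ρ) * c).trace := by
      rw [← Matrix.mul_assoc, Matrix.trace_mul_comm (ρ * c) h, Matrix.mul_assoc]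
    have h2 := hc c
    rw [h1, ← Matrix.mul_assoc] at h2
    rw [Matrix.sub_mul, Matrix.trace_sub, h2, sub_self]
  exact sub_eq_zero.mp (aux_trace_zero _ hz)

lemma aux_key {d : ℕ} (ρ h : Matrix (Fin d) (Fin d) ℂ) (hcomm : ρ * h = h * ρ)
    (c : Matrix (Fin d) (Fin d) ℂ) : (ρ * (h * c)).trace = (ρ * (c * h)).trace := by
  calc (ρ * (h * c)).trace = ((ρ * h) * c).trace := by rw [Matrix.mul_assoc]
    _ = (h * (ρ * c)).trace := by rw [hcomm, Matrix.mul_assoc]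
    _ = ((ρ * c) * h).trace := Matrix.trace_mul_comm h (ρ * c)
    _ = (ρ * (c * h)).trace := by rw [Matrix.mul_assoc]

/-- For a self-adjoint operator `h` and a faithful state `ω(a) = tr(ρ a)`, the GNS
Hamiltonian `H = π_ℓ(h) − π_r(h)`, i.e. `H|a⟩ = |h a − a h*⟩`, is self-adjoint with
respect to the GNS inner product `⟨a|b⟩ = ω(a* b)` if and only if `h` is a symmetry of
`ω`, i.e. `ω([h,a]) = 0` for all `a`. -/
theorem stmt_7 {d : ℕ} (ρ h : Matrix (Fin d) (Fin d) ℂ)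
    (hρ : ρ.PosDef) (htr : ρ.trace = 1) (hh : h.IsHermitian) :
    (∀ a b : Matrix (Fin d) (Fin d) ℂ,
        (ρ * ((h * a - a * hᴴ)ᴴ * b)).trace = (ρ * (aᴴ * (h * b - b * hᴴ))).trace) ↔
    (∀ a : Matrix (Fin d) (Fin d) ℂ, (ρ * (h * a - a * h)).trace = 0) := by
  have hhe : hᴴ = h := hh.eq
  constructor
  · intro H a
    have hcomm : ρ * h = h * ρ := by
      apply aux_comm
      intro c
      have h0 := H cᴴ 1
      simp only [hhe, Matrix.conjTranspose_sub, Matrix.conjTranspose_mul,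
        Matrix.conjTranspose_conjTranspose, Matrix.mul_one, Matrix.one_mul, sub_self,
        Matrix.mul_zero, Matrix.trace_zero] at h0
      rw [Matrix.mul_sub, Matrix.trace_sub, sub_eq_zero] at h0
      exact h0.symm
    have hrw : ρ * (h * a - a * h) = (ρ * h - h * ρ) * a + (h * (ρ * a) - (ρ * a) * h) := by
      noncomm_ring
    rw [hrw, hcomm, sub_self, Matrix.zero_mul, zero_add, Matrix.trace_sub,
      Matrix.trace_mul_comm h (ρ * a), sub_self]
  · intro H a b
    have hcomm : ρ * h = h * ρ := by
      apply aux_comm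
      intro c
      have h0 := H c
      rw [Matrix.mul_sub, Matrix.trace_sub, sub_eq_zero] at h0
      exact h0
    rw [hhe]
    have e0 : (h * a - a * h)ᴴ = aᴴ * h - h * aᴴ := by
      simp [Matrix.conjTranspose_sub, Matrix.conjTranspose_mul, hhe]
    rw [e0]
    have e1 : ρ * ((aᴴ * h - h * aᴴ) * b) = ρ * (aᴴ * (h * b)) - ρ * (h * (aᴴ * b)) := by
      noncomm_ring
    have e2 : ρ * (aᴴ * (h * b - b * h)) = ρ * (aᴴ * (h * b)) - ρ * (aᴴ * b * h) := by
      noncomm_ring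
    rw [e1, e2, Matrix.trace_sub, Matrix.trace_sub, aux_key ρ h hcomm (aᴴ * b)]
end

section
/- For a faithful state ω with GNS Hamiltonian H = π_ℓ(h) − π_r(h) and a Lindbladian L_{M,Λ} built from operators b_1,…,b_r with M anti-Hermitian and Λ positive semidefinite, the first-order change of the expectation of h satisfies ω(L_{M,Λ}(h)) = (1/2) Σ_{ij} [ M_{ij} ⟨b_i|H − H†|b_j⟩ + Λ_{ij} ⟨b_i|H + H†|b_j⟩ ]. -/
open scoped Matrix ComplexOrder

lemma key_conj {d : ℕ} (ρ h x y : Matrix (Fin d) (Fin d) ℂ)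
    (hρ : ρᴴ = ρ) (hh : hᴴ = h) :
    starRingEnd ℂ ((ρ * (yᴴ * (h * x - x * h))).trace)
      = (ρ * (xᴴ * h * y)).trace - (ρ * (h * (xᴴ * y))).trace := by
  have : starRingEnd ℂ ((ρ * (yᴴ * (h * x - x * h))).trace)
      = ((ρ * (yᴴ * (h * x - x * h)))ᴴ).trace := by
    rw [Matrix.trace_conjTranspose]; rfl
  rw [this]
  simp only [Matrix.conjTranspose_mul, Matrix.conjTranspose_sub, Matrix.conjTranspose_conjTranspose, hρ, hh]
  rw [Matrix.sub_mul, Matrix.sub_mul, Matrix.trace_sub]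
  rw [Matrix.trace_mul_cycle (xᴴ * h) y ρ, Matrix.trace_mul_cycle (h * xᴴ) y ρ]
  ring_nf
  simp only [Matrix.mul_assoc]

/-- For a faithful state `ω(a) = tr(ρ a)` with GNS Hamiltonian `H = π_ℓ(h) − π_r(h)`
(`H|a⟩ = |h a − a h*⟩`) and a Lindbladian `L_{M,Λ}` built from operators `b_1, …, b_r`
with `M` anti-Hermitian and `Λ` positive semidefinite, the first-order change of the
expectation of `h` satisfies
`ω(L_{M,Λ}(h)) = (1/2) Σ_{ij} [ M_{ij} ⟨b_i|H − H†|b_j⟩ + Λ_{ij} ⟨b_i|H + H†|b_j⟩ ]`,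
where `⟨a|b⟩ = ω(a* b)` and `⟨b_i|H†|b_j⟩ = conj ⟨b_j|H|b_i⟩`. -/
theorem stmt_10 {d r : ℕ} (ρ h : Matrix (Fin d) (Fin d) ℂ)
    (hρ : ρ.PosDef) (htr : ρ.trace = 1) (hh : h.IsHermitian)
    (b : Fin r → Matrix (Fin d) (Fin d) ℂ)
    (M Λ : Matrix (Fin r) (Fin r) ℂ) (hM : Mᴴ = -M) (hΛ : Λ.PosSemidef)
    (L : Matrix (Fin d) (Fin d) ℂ → Matrix (Fin d) (Fin d) ℂ)
    (hL : ∀ a, L a = ∑ i, ∑ j,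
      ((-(1/2 : ℂ) * M i j) • ((b i)ᴴ * b j * a - a * ((b i)ᴴ * b j)) +
        Λ i j • ((b i)ᴴ * a * b j -
          (1/2 : ℂ) • ((b i)ᴴ * b j * a + a * ((b i)ᴴ * b j)))))
    (H : Matrix (Fin d) (Fin d) ℂ → Matrix (Fin d) (Fin d) ℂ)
    (hH : ∀ a, H a = h * a - a * hᴴ) :
    (ρ * L h).trace = (1/2 : ℂ) * ∑ i, ∑ j,
      (M i j * ((ρ * ((b i)ᴴ * H (b j))).trace -
          starRingEnd ℂ ((ρ * ((b j)ᴴ * H (b i))).trace)) +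
        Λ i j * ((ρ * ((b i)ᴴ * H (b j))).trace +
          starRingEnd ℂ ((ρ * ((b j)ᴴ * H (b i))).trace))) := by
  have hρH : ρᴴ = ρ := hρ.isHermitian
  have hhH : hᴴ = h := hh
  simp only [hL, hH, hhH]
  rw [Matrix.mul_sum, Matrix.trace_sum, Finset.mul_sum]
  refine Finset.sum_congr rfl fun i _ => ?_
  rw [Matrix.mul_sum, Matrix.trace_sum, Finset.mul_sum]
  refine Finset.sum_congr rfl fun j _ => ?_
  rw [key_conj ρ h (b i) (b j) hρH hhH]
  simp only [Matrix.mul_add, Matrix.mul_sub, Matrix.mul_smul, Matrix.trace_add,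
    Matrix.trace_sub, Matrix.trace_smul, smul_eq_mul, Matrix.mul_assoc]
  ring
end

section
/- A self-adjoint h is a quasi-symmetry of a faithful state ω with respect to b_1,…,b_r (i.e., ω([b*b, h]) = 0 for all b ∈ span(b_1,…,b_r)) if and only if the compression P H P† of the GNS Hamiltonian H = π_ℓ(h) − π_r(h) to span(|b_1⟩,…,|b_r⟩) is self-adjoint. -/
open scoped Matrix ComplexOrder

private lemma ident12 {d : ℕ} (ρ h u v : Matrix (Fin d) (Fin d) ℂ)
    (hρH : ρᴴ = ρ) (hhH : hᴴ = h) :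
    starRingEnd ℂ ((ρ * (vᴴ * (h * u - u * hᴴ))).trace) =
      (ρ * (uᴴ * (h * v - v * hᴴ))).trace +
        (ρ * ((uᴴ * v) * h - h * (uᴴ * v))).trace := by
  have : starRingEnd ℂ ((ρ * (vᴴ * (h * u - u * hᴴ))).trace)
      = ((ρ * (vᴴ * (h * u - u * hᴴ)))ᴴ).trace := by
    rw [Matrix.trace_conjTranspose]; rfl
  rw [this, ← Matrix.trace_add, ← Matrix.mul_add]
  have hM : (ρ * (vᴴ * (h * u - u * hᴴ)))ᴴ
      = ((uᴴ * h - h * uᴴ) * v) * ρ := by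
    simp [Matrix.conjTranspose_mul, Matrix.sub_mul, Matrix.mul_sub, hρH, hhH,
      Matrix.mul_assoc]
  rw [hM, Matrix.trace_mul_comm]
  congr 1
  simp only [hhH]
  noncomm_ring

/-- A self-adjoint `h` is a quasi-symmetry of the faithful state `ω(a) = tr(ρ a)` with
respect to `b_1, …, b_r` (i.e. `ω([b*b, h]) = 0` for all `b ∈ span(b_1, …, b_r)`)
if and only if the compression `P H P†` of the GNS Hamiltonian
`H : a ↦ h a − a h*` to `V = span(|b_1⟩, …, |b_r⟩)` is self-adjoint, i.e.
`⟨u|H|v⟩ = conj ⟨v|H|u⟩` for all `u, v ∈ V`, where `⟨a|b⟩ = ω(a* b)`. -/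
theorem stmt_12 {d r : ℕ} (ρ h : Matrix (Fin d) (Fin d) ℂ)
    (hρ : ρ.PosDef) (htr : ρ.trace = 1) (hh : h.IsHermitian)
    (b : Fin r → Matrix (Fin d) (Fin d) ℂ) :
    (∀ a ∈ Submodule.span ℂ (Set.range b),
        (ρ * ((aᴴ * a) * h - h * (aᴴ * a))).trace = 0) ↔
    (∀ u ∈ Submodule.span ℂ (Set.range b), ∀ v ∈ Submodule.span ℂ (Set.range b),
        (ρ * (uᴴ * (h * v - v * hᴴ))).trace =
          starRingEnd ℂ ((ρ * (vᴴ * (h * u - u * hᴴ))).trace)) := by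
  have hρH : ρᴴ = ρ := hρ.1
  have hhH : hᴴ = h := hh
  let f : Matrix (Fin d) (Fin d) ℂ → ℂ :=
    fun m => (ρ * (m * h - h * m)).trace
  have fadd : ∀ x y, f (x + y) = f x + f y := by
    intro x y
    show (ρ * ((x + y) * h - h * (x + y))).trace = _
    rw [show (x + y) * h - h * (x + y) = (x * h - h * x) + (y * h - h * y) by
      rw [Matrix.add_mul, Matrix.mul_add]; abel, Matrix.mul_add, Matrix.trace_add]
  have fsmul : ∀ (c : ℂ) x, f (c • x) = c * f x := by
    intro c x
    show (ρ * ((c • x) * h - h * (c • x))).trace = c * (ρ * (x * h - h * x)).trace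
    rw [Matrix.smul_mul, Matrix.mul_smul, ← smul_sub, Matrix.mul_smul,
      Matrix.trace_smul, smul_eq_mul]
  constructor
  · intro H u hu v hv
    have key : (ρ * ((uᴴ * v) * h - h * (uᴴ * v))).trace = 0 := by
      have h1 : f ((u + v)ᴴ * (u + v)) = 0 := H (u + v) (add_mem hu hv)
      have h2 : f (uᴴ * u) = 0 := H u hu
      have h3 : f (vᴴ * v) = 0 := H v hv
      have h4 : f ((u + Complex.I • v)ᴴ * (u + Complex.I • v)) = 0 :=
        H (u + Complex.I • v) (add_mem hu (Submodule.smul_mem _ _ hv))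
      have e1 : (u + v)ᴴ * (u + v) = (uᴴ * u + vᴴ * v) + (uᴴ * v + vᴴ * u) := by
        simp [Matrix.conjTranspose_add, Matrix.add_mul, Matrix.mul_add]
        abel
      have e2 : (u + Complex.I • v)ᴴ * (u + Complex.I • v)
          = (uᴴ * u + vᴴ * v) + (Complex.I • (uᴴ * v) + (-Complex.I) • (vᴴ * u)) := by
        simp only [neg_smul]
        simp [Matrix.conjTranspose_add, Matrix.conjTranspose_smul,
          Matrix.add_mul, Matrix.mul_add, Matrix.smul_mul, Matrix.mul_smul,
          smul_smul, Complex.star_def, Complex.conj_I, Complex.I_mul_I]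
        abel
      rw [e1] at h1
      rw [e2] at h4
      rw [fadd, fadd, fadd] at h1 h4
      rw [fsmul, fsmul] at h4
      have goal2 : f (uᴴ * v) = 0 := by
        have s1 : f (uᴴ * v) + f (vᴴ * u) = 0 := by
          linear_combination h1 - h2 - h3
        have s2 : Complex.I * f (uᴴ * v) + (-Complex.I) * f (vᴴ * u) = 0 := by
          linear_combination h4 - h2 - h3
        have h2' : (2 : ℂ) * f (uᴴ * v) = 0 := by
          linear_combination s1 - Complex.I * s2 + (f (uᴴ * v) - f (vᴴ * u)) * Complex.I_sq
        have := mul_eq_zero.mp h2'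
        simpa using this
      exact goal2
    rw [ident12 ρ h u v hρH hhH]
    linear_combination -key
  · intro H a ha
    have h1 := H a ha a ha
    have hid := ident12 ρ h a a hρH hhH
    linear_combination -hid - h1
end

section
/- Suppose ω is a faithful state with density matrix ρ, h is self-adjoint with [ρ,h] = 0, T > 0, and T log Δ + H ≥ 0 on the entire GNS space (where log Δ = π_ℓ(log ρ) − π_r(log ρ) and H = π_ℓ(h) − π_r(h)). Then T log Δ + H = 0 and ρ = e^{−h/T}/tr(e^{−h/T}), i.e., ω is the Gibbs state of h at temperature T. -/
/-!
With `A = T ℓ + h`, the operator `T log Δ + H` is `v ↦ A v - v A`. Testing positivity on the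
rank-one operator `|uᵢ⟩⟨uⱼ|` built from eigenvectors of `A` gives `(aᵢ - aⱼ) ⟨uⱼ|ρ|uⱼ⟩ ≥ 0`,
and `ρ > 0` forces `aᵢ ≥ aⱼ` for all `i, j`. Hence `A` is a scalar `c`, so the commutator
vanishes and `ρ = exp ℓ = e^{c/T} e^{-h/T}`; the normalisation `tr ρ = 1` fixes `e^{c/T}`.
-/

open scoped Matrix ComplexOrder
open Matrix

namespace Matrix

variable {𝕜 n : Type*} [RCLike 𝕜] [Fintype n]

lemma IsHermitian.trace_mul_conjTranspose_mul_commutator_vecMulVec {A : Matrix n n 𝕜}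
    (hA : A.IsHermitian) (ρ : Matrix n n 𝕜) {x y : n → 𝕜} {a b : ℝ} (hx : A *ᵥ x = a • x)
    (hy : A *ᵥ y = b • y) (hxx : star x ⬝ᵥ x = 1) :
    (ρ * ((vecMulVec x (star y))ᴴ *
      (A * vecMulVec x (star y) - vecMulVec x (star y) * A))).trace =
      ((a - b : ℝ) : 𝕜) * (star y ⬝ᵥ ρ *ᵥ y) := by
  set v := vecMulVec x (star y)
  have hAv : A * v = (a : 𝕜) • v := by
    rw [mul_vecMulVec, hx, RCLike.real_smul_eq_coe_smul (K := 𝕜), smul_vecMulVec]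
  have hvA : v * A = (b : 𝕜) • v := by
    have hyA : star y ᵥ* A = star (A *ᵥ y) := by rw [star_mulVec, hA.eq]
    rw [vecMulVec_mul, hyA, hy, RCLike.real_smul_eq_coe_smul (K := 𝕜), star_smul,
      RCLike.star_def, RCLike.conj_ofReal, vecMulVec_smul]
  have hvv : vᴴ * v = vecMulVec y (star y) := by
    rw [conjTranspose_vecMulVec, star_star, vecMulVec_mul_vecMulVec, hxx, one_smul]
  rw [hAv, hvA, ← sub_smul, mul_smul_comm, hvv, mul_smul_comm, trace_smul, mul_vecMulVec,
    trace_vecMulVec, dotProduct_comm, RCLike.ofReal_sub, smul_eq_mul]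

variable [DecidableEq n]

lemma IsHermitian.eigenvalues_le_of_trace_commutator_nonneg {ρ A : Matrix n n 𝕜} (hρ : ρ.PosDef)
    (hA : A.IsHermitian) (hpos : ∀ v : Matrix n n 𝕜, 0 ≤ (ρ * (vᴴ * (A * v - v * A))).trace)
    (i j : n) : hA.eigenvalues j ≤ hA.eigenvalues i := by
  have hu : 0 < star (hA.eigenvectorBasis j).ofLp ⬝ᵥ ρ *ᵥ (hA.eigenvectorBasis j).ofLp :=
    hρ.dotProduct_mulVec_pos <| (WithLp.ofLp_eq_zero 2).ne.2 <|
      hA.eigenvectorBasis.orthonormal.ne_zero j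
  have hnorm : star (hA.eigenvectorBasis i).ofLp ⬝ᵥ (hA.eigenvectorBasis i).ofLp = 1 := by
    rw [dotProduct_comm, ← EuclideanSpace.inner_eq_star_dotProduct, inner_self_eq_norm_sq_to_K,
      hA.eigenvectorBasis.orthonormal.1 i, RCLike.ofReal_one, one_pow]
  obtain ⟨x, hx, hxu⟩ := RCLike.pos_iff_exists_ofReal.mp hu
  have h := hpos <|
    vecMulVec (hA.eigenvectorBasis i).ofLp (star (hA.eigenvectorBasis j).ofLp)
  rw [hA.trace_mul_conjTranspose_mul_commutator_vecMulVec ρ (hA.mulVec_eigenvectorBasis i)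
    (hA.mulVec_eigenvectorBasis j) hnorm, ← hxu, ← RCLike.ofReal_mul, RCLike.ofReal_nonneg] at h
  exact sub_nonneg.mp (nonneg_of_mul_nonneg_left h hx)

lemma IsHermitian.eq_smul_one_of_eigenvalues_eq {A : Matrix n n 𝕜} (hA : A.IsHermitian) (c : ℝ)
    (h : ∀ i, hA.eigenvalues i = c) : A = (c : 𝕜) • 1 := by
  rw [hA.spectral_theorem, show RCLike.ofReal ∘ hA.eigenvalues = fun _ ↦ (c : 𝕜) from
    funext fun i ↦ by simp [h], ← smul_one_eq_diagonal, ← Algebra.algebraMap_eq_smul_one,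
    AlgHomClass.commutes]

lemma IsHermitian.exists_eq_smul_one_of_trace_commutator_nonneg {ρ A : Matrix n n 𝕜}
    (hρ : ρ.PosDef) (hA : A.IsHermitian)
    (hpos : ∀ v : Matrix n n 𝕜, 0 ≤ (ρ * (vᴴ * (A * v - v * A))).trace) :
    ∃ c : ℝ, A = (c : 𝕜) • 1 := by
  cases isEmpty_or_nonempty n with
  | inl _ => exact ⟨0, Subsingleton.elim _ _⟩
  | inr hn =>
    obtain ⟨i₀⟩ := hn
    exact ⟨hA.eigenvalues i₀, hA.eq_smul_one_of_eigenvalues_eq _ fun i ↦ le_antisymm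
      (hA.eigenvalues_le_of_trace_commutator_nonneg hρ hpos i₀ i)
      (hA.eigenvalues_le_of_trace_commutator_nonneg hρ hpos i i₀)⟩

lemma exp_smul_one_add_eq_of_trace_eq_one (c : 𝕜) (X : Matrix n n 𝕜)
    (htr : (NormedSpace.exp (c • 1 + X)).trace = 1) :
    NormedSpace.exp (c • 1 + X) = (NormedSpace.exp X).trace⁻¹ • NormedSpace.exp X := by
  have hsplit : NormedSpace.exp (c • 1 + X) = NormedSpace.exp c • NormedSpace.exp X := by
    rw [exp_add_of_commute _ _ ((Commute.one_left X).smul_left c), smul_one_eq_diagonal,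
      exp_diagonal, Pi.exp_def, ← smul_one_eq_diagonal, smul_mul, one_mul]
  rw [hsplit, trace_smul, smul_eq_mul] at htr
  rw [hsplit, eq_inv_of_mul_eq_one_left htr]

end Matrix

theorem stmt_17_general {d : ℕ} (ρ h : Matrix (Fin d) (Fin d) ℂ)
    (hρ : ρ.PosDef) (htr : ρ.trace = 1) (hh : h.IsHermitian)
    (ℓ : Matrix (Fin d) (Fin d) ℂ) (hℓ : ℓ.IsHermitian)
    (hexp : NormedSpace.exp ℓ = ρ)
    (T : ℝ) (hT : 0 < T)
    (hpos : ∀ v : Matrix (Fin d) (Fin d) ℂ,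
      0 ≤ (ρ * (vᴴ * ((T : ℂ) • (ℓ * v - v * ℓ) + (h * v - v * hᴴ)))).trace) :
    (∀ v : Matrix (Fin d) (Fin d) ℂ,
      (T : ℂ) • (ℓ * v - v * ℓ) + (h * v - v * hᴴ) = 0) ∧
    ρ = (NormedSpace.exp ((-(T : ℂ)⁻¹) • h)).trace⁻¹ •
      NormedSpace.exp ((-(T : ℂ)⁻¹) • h) := by
  set A := (T : ℂ) • ℓ + h
  have hA : A.IsHermitian := (hℓ.smul (Complex.conj_ofReal T)).add hh
  have hcommutator (v : Matrix (Fin d) (Fin d) ℂ) :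
      (T : ℂ) • (ℓ * v - v * ℓ) + (h * v - v * hᴴ) = A * v - v * A := by
    rw [hh.eq, add_mul, mul_add, Matrix.smul_mul, Matrix.mul_smul, smul_sub]
    abel
  obtain ⟨c, hc⟩ := hA.exists_eq_smul_one_of_trace_commutator_nonneg hρ fun v ↦
    hcommutator v ▸ hpos v
  refine ⟨fun v ↦ by
    rw [hcommutator, hc, Matrix.smul_mul, Matrix.mul_smul, one_mul, mul_one, sub_self], ?_⟩
  have hTne : (T : ℂ) ≠ 0 := Complex.ofReal_ne_zero.mpr hT.ne'
  have hℓc : ℓ = ((T : ℂ)⁻¹ * c) • 1 + (-(T : ℂ)⁻¹) • h := by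
    rw [← inv_smul_smul₀ hTne ℓ, eq_sub_of_add_eq hc]
    module
  rw [← hexp, hℓc] at htr ⊢
  exact exp_smul_one_add_eq_of_trace_eq_one _ _ htr

/-- Suppose `ω` is a faithful state with density matrix `ρ`, `h` is self-adjoint with
`[ρ, h] = 0`, `T > 0`, and `T log Δ + H ≥ 0` on the entire GNS space, i.e.
`⟨v| T log Δ + H |v⟩ ≥ 0` for all `v ∈ A` in the GNS inner product `⟨a|b⟩ = tr(ρ a* b)`,
where `log Δ = π_ℓ(log ρ) − π_r(log ρ)` (with `log ρ = ℓ` the Hermitian logarithm of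
`ρ`) and `H = π_ℓ(h) − π_r(h)`.  Then `T log Δ + H = 0` and
`ρ = e^{−h/T}/tr(e^{−h/T})`, i.e. `ω` is the Gibbs state of `h` at temperature `T`. -/
theorem stmt_17 {d : ℕ} (ρ h : Matrix (Fin d) (Fin d) ℂ)
    (hρ : ρ.PosDef) (htr : ρ.trace = 1) (hh : h.IsHermitian)
    (hcomm : ρ * h = h * ρ)
    (ℓ : Matrix (Fin d) (Fin d) ℂ) (hℓ : ℓ.IsHermitian)
    (hexp : NormedSpace.exp ℓ = ρ)
    (T : ℝ) (hT : 0 < T)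
    (hpos : ∀ v : Matrix (Fin d) (Fin d) ℂ,
      0 ≤ (ρ * (vᴴ * ((T : ℂ) • (ℓ * v - v * ℓ) + (h * v - v * hᴴ)))).trace) :
    (∀ v : Matrix (Fin d) (Fin d) ℂ,
      (T : ℂ) • (ℓ * v - v * ℓ) + (h * v - v * hᴴ) = 0) ∧
    ρ = (NormedSpace.exp ((-(T : ℂ)⁻¹) • h)).trace⁻¹ •
      NormedSpace.exp ((-(T : ℂ)⁻¹) • h) :=
  stmt_17_general ρ h hρ htr hh ℓ hℓ hexp T hT hpos
end
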